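/- arXiv:1909.01240 — 2 statements merged into one kernel-verified Lean document; each statement's English description precedes it below -/
import Mathlib

section
/- There is a well-defined Lie algebra homomorphism φ from gl_{2n+1}(ℂ)^θ to gl_{n+1}(ℂ) ⊕ gl_n(ℂ) determined by φ(e_i) = e_i + ē_i and φ(f_i) = f_i + f̄_i for i < n, φ(e_n) = 2e_n, φ(f_n) = f_n, φ(d_i) = h_i + h̄_i for 1 ≤ i ≤ n, and φ(d_{n+1}) = 2h_{n+1}, where the unbarred generators on the right lie in gl_{n+1} and the barred ones in gl_n. Moreover φ is an isomorphism of Lie algebras. -/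
open Matrix

noncomputable section

/-- The matrix unit `E_{p,q}` in `gl_m` (1-based indexing). -/
def Eu (m p q : ℕ) : Matrix (Fin m) (Fin m) ℂ :=
  Matrix.of fun i j => if (i : ℕ) + 1 = p ∧ (j : ℕ) + 1 = q then 1 else 0

/-- `gl_{2n+1}(ℂ)`. -/
abbrev gl (n : ℕ) := Matrix (Fin (2*n+1)) (Fin (2*n+1)) ℂ

/-- The involution `θ` of `gl_{2n+1}(ℂ)` with `θ(E_i) = F_{2n+1-i}`,
`θ(F_i) = E_{2n+1-i}`, `θ(H_i) = H_{2n+2-i}`. -/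
def theta (n : ℕ) (X : gl n) : gl n := Matrix.of fun i j => X i.rev j.rev

theorem theta_linear (n : ℕ) (c : ℂ) (X Y : gl n) :
    theta n (X + Y) = theta n X + theta n Y ∧ theta n (c • X) = c • theta n X := by
  constructor <;> (ext i j; simp [theta])

/-- The fixed-point subalgebra `gl_{2n+1}(ℂ)^θ`, as a subspace. -/
def Fixed (n : ℕ) : Submodule ℂ (gl n) where
  carrier := {X | theta n X = X}
  add_mem' := by
    intro a b ha hb
    simp only [Set.mem_setOf_eq] at *
    rw [(theta_linear n 0 a b).1, ha, hb]
  zero_mem' := by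
    simp only [Set.mem_setOf_eq]
    ext i j; simp [theta]
  smul_mem' := by
    intro c x hx
    simp only [Set.mem_setOf_eq] at *
    rw [(theta_linear n c x x).2, hx]

/-- `e_i = E_i + F_{2n+1-i}`. -/
def eG (n i : ℕ) : gl n := Eu (2*n+1) i (i+1) + Eu (2*n+1) (2*n+2-i) (2*n+1-i)

/-- `f_i = F_i + E_{2n+1-i}`. -/
def fG (n i : ℕ) : gl n := Eu (2*n+1) (i+1) i + Eu (2*n+1) (2*n+1-i) (2*n+2-i)

/-- `d_a = H_a + H_{2n+2-a}` (so `d_{n+1} = 2H_{n+1}`). -/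
def dG (n a : ℕ) : gl n := Eu (2*n+1) a a + Eu (2*n+1) (2*n+2-a) (2*n+2-a)

/-!
θ is conjugation by the reversal permutation matrix `J = revMatrix n`, an involution whose
`+1`- and `-1`-eigenspaces have dimensions `n + 1` and `n`, so `gl_{2n+1}^θ`, the centraliser
of `J`, is block diagonal in an eigenbasis of `J`, i.e. isomorphic to `gl_{n+1} ⊕ gl_n`. With
0-based indices the eigenbasis is `e_a + e_{2n-a}` (`a ≤ n`) and `e_b - e_{2n-b}` (`b < n`); at
`a = n` the first family gives `2 e_n`, and this normalisation is what makes `φ(e_n) = 2 e_n` and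
`φ(f_n) = f_n`. Every generator is `E + θ(E)` for a matrix unit `E`, and `θ` does not change the
diagonal blocks.
-/

section BlockSign

variable {R m p : Type*} [Ring R] [Fintype m] [Fintype p] [DecidableEq m] [DecidableEq p]

def Matrix.blockSign (m p R : Type*) [Ring R] [DecidableEq m] [DecidableEq p] :
    Matrix (m ⊕ p) (m ⊕ p) R :=
  fromBlocks 1 0 0 (-1)

theorem Matrix.blockSign_mul_mul_blockSign (M : Matrix (m ⊕ p) (m ⊕ p) R) :
    blockSign m p R * M * blockSign m p R =
      fromBlocks M.toBlocks₁₁ (-M.toBlocks₁₂) (-M.toBlocks₂₁) M.toBlocks₂₂ := by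
  conv_lhs => rw [← fromBlocks_toBlocks M]
  simp [blockSign, fromBlocks_multiply]

theorem Matrix.blockSign_mul_fromBlocks_mul_blockSign (A : Matrix m m R) (B : Matrix p p R) :
    blockSign m p R * fromBlocks A 0 0 B * blockSign m p R = fromBlocks A 0 0 B := by
  simp [blockSign_mul_mul_blockSign]

theorem Matrix.eq_fromBlocks_of_blockSign_mul_mul_blockSign [IsAddTorsionFree R]
    {M : Matrix (m ⊕ p) (m ⊕ p) R} (hM : blockSign m p R * M * blockSign m p R = M) :
    M = fromBlocks M.toBlocks₁₁ 0 0 M.toBlocks₂₂ := by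
  rw [blockSign_mul_mul_blockSign] at hM
  conv_rhs at hM => rw [← fromBlocks_toBlocks M]
  obtain ⟨-, h₁₂, h₂₁, -⟩ := fromBlocks_inj.mp hM
  have h₁₂' : M.toBlocks₁₂ = 0 := by
    ext i j
    exact self_eq_neg.mp (congrFun₂ h₁₂ i j).symm
  have h₂₁' : M.toBlocks₂₁ = 0 := by
    ext i j
    exact self_eq_neg.mp (congrFun₂ h₂₁ i j).symm
  conv_lhs => rw [← fromBlocks_toBlocks M, h₁₂', h₂₁']

end BlockSign

section FixedPoints

variable {n : ℕ}

def revMatrix (n : ℕ) : gl n := (Fin.revPerm : Equiv.Perm (Fin (2*n+1))).permMatrix ℂ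

@[simp] theorem revMatrix_apply (i j : Fin (2*n+1)) :
    revMatrix n i j = if i.rev = j then 1 else 0 := by
  simp [revMatrix, PEquiv.toMatrix_apply]

theorem revMatrix_mul_self : revMatrix n * revMatrix n = 1 := by
  rw [revMatrix, PEquiv.toMatrix_toPEquiv_mul]
  ext i j
  simp [PEquiv.toMatrix_apply, one_apply]

theorem theta_eq_revMatrix_conj (X : gl n) : theta n X = revMatrix n * X * revMatrix n := by
  rw [revMatrix, PEquiv.toMatrix_toPEquiv_mul, PEquiv.mul_toMatrix_toPEquiv, Fin.revPerm_symm]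
  rfl

def posIdx (n : ℕ) : Fin (n+1) → Fin (2*n+1) := Fin.castLE (by omega)

@[simp] theorem val_posIdx (a : Fin (n+1)) : (posIdx n a : ℕ) = a := rfl

def negIdx (n : ℕ) : Fin n → Fin (2*n+1) := Fin.castLE (by omega)

def eigenBasis (n : ℕ) : Matrix (Fin (2*n+1)) (Fin (n+1) ⊕ Fin n) ℂ :=
  fromCols ((1 + revMatrix n).submatrix id (posIdx n)) ((1 - revMatrix n).submatrix id (negIdx n))

-- Row `a` of `1 + J` times column `a` of `eigenBasis` is `2`, or `4` when `a = n`.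
def eigenBasisInv (n : ℕ) : Matrix (Fin (n+1) ⊕ Fin n) (Fin (2*n+1)) ℂ :=
  fromRows (diagonal (fun a => if a = Fin.last n then (4⁻¹ : ℂ) else 2⁻¹) *
      (1 + revMatrix n).submatrix (posIdx n) id)
    ((2⁻¹ : ℂ) • (1 - revMatrix n).submatrix (negIdx n) id)

theorem eigenBasisInv_mul_eigenBasis : eigenBasisInv n * eigenBasis n = 1 := by
  have hadd : (1 + revMatrix n) * (1 + revMatrix n) = (2 : ℂ) • (1 + revMatrix n) := by
    rw [add_mul, mul_add, mul_add, revMatrix_mul_self]; simp only [one_mul, mul_one, two_smul]; abel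
  have hsub : (1 - revMatrix n) * (1 - revMatrix n) = (2 : ℂ) • (1 - revMatrix n) := by
    rw [sub_mul, mul_sub, mul_sub, revMatrix_mul_self]; simp only [one_mul, mul_one, two_smul]; abel
  have haddsub : (1 + revMatrix n) * (1 - revMatrix n) = 0 := by
    rw [add_mul, mul_sub, mul_sub, revMatrix_mul_self]; simp only [one_mul, mul_one]; abel
  have hsubadd : (1 - revMatrix n) * (1 + revMatrix n) = 0 := by
    rw [sub_mul, mul_add, mul_add, revMatrix_mul_self]; simp only [one_mul, mul_one]; abel
  have hid : Function.Bijective (id : Fin (2*n+1) → Fin (2*n+1)) := Function.bijective_id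
  rw [eigenBasisInv, eigenBasis, fromRows_mul_fromCols, ← fromBlocks_one]
  congr 1
  · rw [Matrix.mul_assoc, ← submatrix_mul _ _ _ _ _ hid, hadd]
    ext a b
    simp only [Fin.ext_iff, Fin.val_last, smul_add, posIdx, diagonal_mul, submatrix_apply,
      Matrix.add_apply, Matrix.smul_apply, one_apply, Fin.val_castLE, smul_eq_mul, mul_ite,
      mul_one, mul_zero, revMatrix_apply, Fin.val_rev, ite_mul]
    have := a.2; have := b.2
    split_ifs <;> first | omega | norm_num
  · rw [Matrix.mul_assoc, ← submatrix_mul _ _ _ _ _ hid, haddsub]; simp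
  · rw [Matrix.smul_mul, ← submatrix_mul _ _ _ _ _ hid, hsubadd]; simp
  · rw [Matrix.smul_mul, ← submatrix_mul _ _ _ _ _ hid, hsub]
    ext a b
    simp only [negIdx, Matrix.smul_apply, submatrix_apply, Matrix.sub_apply, one_apply,
      Fin.ext_iff, Fin.val_castLE, revMatrix_apply, Fin.val_rev, smul_eq_mul, ne_eq,
      OfNat.ofNat_ne_zero, not_false_eq_true, inv_mul_cancel_left₀, sub_eq_self,
      ite_eq_right_iff, one_ne_zero, imp_false]
    omega

theorem eigenBasis_mul_eigenBasisInv : eigenBasis n * eigenBasisInv n = 1 :=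
  (mul_eq_one_comm_of_equiv (finSumFinEquiv.trans (finCongr (by omega)))).mp
    eigenBasisInv_mul_eigenBasis

theorem revMatrix_mul_eigenBasis :
    revMatrix n * eigenBasis n = eigenBasis n * blockSign (Fin (n+1)) (Fin n) ℂ := by
  ext i (a | b)
  · simp [eigenBasis, blockSign, mul_apply, Fintype.sum_sum_type, one_apply, add_comm]
  · simp [eigenBasis, blockSign, mul_apply, Fintype.sum_sum_type, one_apply]

theorem eigenBasisInv_mul_revMatrix :
    eigenBasisInv n * revMatrix n = blockSign (Fin (n+1)) (Fin n) ℂ * eigenBasisInv n := by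
  calc eigenBasisInv n * revMatrix n
      = eigenBasisInv n * (revMatrix n * eigenBasis n) * eigenBasisInv n := by
        rw [Matrix.mul_assoc, Matrix.mul_assoc, eigenBasis_mul_eigenBasisInv, Matrix.mul_one]
    _ = blockSign (Fin (n+1)) (Fin n) ℂ * eigenBasisInv n := by
        rw [revMatrix_mul_eigenBasis, ← Matrix.mul_assoc, eigenBasisInv_mul_eigenBasis,
          Matrix.one_mul]

theorem eigenBasisInv_mul_theta_mul_eigenBasis (X : gl n) :
    eigenBasisInv n * theta n X * eigenBasis n =
      blockSign _ _ ℂ * (eigenBasisInv n * X * eigenBasis n) * blockSign _ _ ℂ := by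
  simp only [theta_eq_revMatrix_conj, Matrix.mul_assoc, revMatrix_mul_eigenBasis]
  simp only [← Matrix.mul_assoc, eigenBasisInv_mul_revMatrix]

abbrev GlPair (n : ℕ) := Matrix (Fin (n+1)) (Fin (n+1)) ℂ × Matrix (Fin n) (Fin n) ℂ

def diagBlocks (n : ℕ) : gl n →ₗ[ℂ] GlPair n where
  toFun X := ((eigenBasisInv n * X * eigenBasis n).toBlocks₁₁,
    (eigenBasisInv n * X * eigenBasis n).toBlocks₂₂)
  map_add' X Y := by
    simp only [Matrix.mul_add, Matrix.add_mul]
    ext <;> simp [toBlocks₁₁, toBlocks₂₂]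
  map_smul' c X := by
    ext <;> simp [toBlocks₁₁, toBlocks₂₂]

theorem diagBlocks_apply (X : gl n) :
    diagBlocks n X = ((eigenBasisInv n * X * eigenBasis n).toBlocks₁₁,
      (eigenBasisInv n * X * eigenBasis n).toBlocks₂₂) :=
  rfl

theorem diagBlocks_theta (X : gl n) : diagBlocks n (theta n X) = diagBlocks n X := by
  simp [diagBlocks_apply, eigenBasisInv_mul_theta_mul_eigenBasis, blockSign_mul_mul_blockSign]

theorem conj_eq_fromBlocks_diagBlocks {X : gl n} (hX : theta n X = X) :
    eigenBasisInv n * X * eigenBasis n = fromBlocks (diagBlocks n X).1 0 0 (diagBlocks n X).2 :=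
  eq_fromBlocks_of_blockSign_mul_mul_blockSign <| by
    rw [← eigenBasisInv_mul_theta_mul_eigenBasis, hX]

theorem diagBlocks_mul {X : gl n} (hX : theta n X = X) (Y : gl n) :
    diagBlocks n (X * Y) = diagBlocks n X * diagBlocks n Y := by
  have hXY : eigenBasisInv n * (X * Y) * eigenBasis n =
      (eigenBasisInv n * X * eigenBasis n) * (eigenBasisInv n * Y * eigenBasis n) := by
    simp only [Matrix.mul_assoc]
    rw [← Matrix.mul_assoc (eigenBasis n), eigenBasis_mul_eigenBasisInv, Matrix.one_mul]
  rw [diagBlocks_apply (X * Y), hXY, conj_eq_fromBlocks_diagBlocks hX,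
    ← fromBlocks_toBlocks (eigenBasisInv n * Y * eigenBasis n), fromBlocks_multiply]
  simp [diagBlocks_apply, Prod.mul_def]

def ofDiagBlocks (n : ℕ) (p : GlPair n) : gl n :=
  eigenBasis n * fromBlocks p.1 0 0 p.2 * eigenBasisInv n

theorem theta_ofDiagBlocks (p : GlPair n) : theta n (ofDiagBlocks n p) = ofDiagBlocks n p := by
  rw [theta_eq_revMatrix_conj, ofDiagBlocks]
  simp only [← Matrix.mul_assoc, revMatrix_mul_eigenBasis]
  simp only [Matrix.mul_assoc, eigenBasisInv_mul_revMatrix]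
  simp only [← Matrix.mul_assoc, blockSign_mul_fromBlocks_mul_blockSign]

theorem diagBlocks_ofDiagBlocks (p : GlPair n) : diagBlocks n (ofDiagBlocks n p) = p := by
  have h : eigenBasisInv n * ofDiagBlocks n p * eigenBasis n = fromBlocks p.1 0 0 p.2 := by
    simp only [ofDiagBlocks, Matrix.mul_assoc, eigenBasisInv_mul_eigenBasis, Matrix.mul_one]
    simp only [← Matrix.mul_assoc, eigenBasisInv_mul_eigenBasis, Matrix.one_mul]
  simp [diagBlocks_apply, h]

theorem ofDiagBlocks_diagBlocks {X : gl n} (hX : theta n X = X) :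
    ofDiagBlocks n (diagBlocks n X) = X := by
  rw [ofDiagBlocks, ← conj_eq_fromBlocks_diagBlocks hX]
  simp only [Matrix.mul_assoc, eigenBasis_mul_eigenBasisInv, Matrix.mul_one]
  simp only [← Matrix.mul_assoc, eigenBasis_mul_eigenBasisInv, Matrix.one_mul]

def fixedEquiv (n : ℕ) : Fixed n ≃ₗ[ℂ] GlPair n where
  toFun X := diagBlocks n X
  map_add' X Y := (diagBlocks n).map_add X Y
  map_smul' c X := (diagBlocks n).map_smul c X
  invFun p := ⟨ofDiagBlocks n p, theta_ofDiagBlocks p⟩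
  left_inv X := Subtype.ext (ofDiagBlocks_diagBlocks X.2)
  right_inv := diagBlocks_ofDiagBlocks

theorem Matrix.mul_single_mul_apply {R l m o p : Type*} [Semiring R] [Fintype m] [Fintype o]
    [DecidableEq m] [DecidableEq o] (M : Matrix l m R) (N : Matrix o p R) (i : m) (j : o) (c : R)
    (x : l) (y : p) : (M * single i j c * N) x y = M x i * c * N j y := by
  simp [mul_apply, single_apply, ite_and]

theorem Eu_succ_succ {m : ℕ} (i j : Fin m) : Eu m (i+1) (j+1) = single i j 1 := by
  ext a b
  simp [Eu, single_apply, Fin.ext_iff, eq_comm]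

theorem Eu_eq_zero {m p q : ℕ} (h : p = 0 ∨ q = 0 ∨ m < p ∨ m < q) : Eu m p q = 0 := by
  ext i j
  rw [Eu, of_apply, Matrix.zero_apply, if_neg]
  omega

theorem theta_Eu (p q : ℕ) : theta n (Eu (2*n+1) p q) = Eu (2*n+1) (2*n+2-p) (2*n+2-q) := by
  ext i j
  simp only [theta, Eu, of_apply, Fin.val_rev]
  have := i.2; have := j.2
  congr 1; apply propext; omega

theorem diagBlocks_add_theta (X : gl n) :
    diagBlocks n (X + theta n X) = (2 : ℂ) • diagBlocks n X := by
  rw [map_add, diagBlocks_theta, two_smul]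

theorem diagBlocks_single (a b : Fin (n+1)) :
    diagBlocks n (single (posIdx n a) (posIdx n b) 1) =
      ((if b = Fin.last n then 1 else 2⁻¹ : ℂ) • Eu (n+1) (a+1) (b+1),
        (2⁻¹ : ℂ) • Eu n (a+1) (b+1)) := by
  have := a.2; have := b.2
  ext c d <;> have := c.2 <;> have := d.2
  · simp only [diagBlocks_apply, eigenBasisInv, eigenBasis, Fin.ext_iff, Fin.val_last, posIdx,
      fromRows_mul, smul_mul, mul_fromCols, fromCols_fromRows_eq_fromBlocks,
      toBlocks_fromBlocks₁₁, mul_single_mul_apply, diagonal_mul, submatrix_apply, id_eq,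
      Matrix.add_apply, one_apply, Fin.val_castLE, revMatrix_apply, Fin.val_rev, ite_mul,
      mul_one, Eu, Nat.add_right_cancel_iff, Matrix.smul_apply, of_apply, smul_eq_mul, mul_ite,
      mul_zero]
    split_ifs <;> first | omega | norm_num
  · simp only [diagBlocks_apply, eigenBasisInv, eigenBasis, Fin.ext_iff, posIdx, negIdx,
      fromRows_mul, smul_mul, mul_fromCols, fromCols_fromRows_eq_fromBlocks,
      toBlocks_fromBlocks₂₂, Matrix.smul_apply, mul_single_mul_apply, submatrix_apply, id_eq,
      Matrix.sub_apply, one_apply, Fin.val_castLE, revMatrix_apply, Fin.val_rev, mul_one,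
      smul_eq_mul, Eu, Nat.add_right_cancel_iff, of_apply, mul_ite, mul_zero]
    split_ifs <;> first | omega | norm_num

theorem diagBlocks_Eu_add_theta {p q : ℕ} (hp : p ≤ n+1) (hq : q ≤ n+1) :
    diagBlocks n (Eu (2*n+1) p q + theta n (Eu (2*n+1) p q)) =
      ((if q = n+1 then 2 else 1 : ℂ) • Eu (n+1) p q, Eu n p q) := by
  by_cases h0 : p = 0 ∨ q = 0
  · have hE : ∀ m, Eu m p q = 0 := fun m => Eu_eq_zero (by omega)
    simp only [hE, theta_eq_revMatrix_conj, mul_zero, zero_mul, add_zero, map_zero, smul_zero]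
    rfl
  obtain ⟨a, rfl⟩ : ∃ a : Fin (n+1), (a : ℕ) + 1 = p :=
    ⟨⟨p-1, by omega⟩, Nat.sub_add_cancel (by omega)⟩
  obtain ⟨b, rfl⟩ : ∃ b : Fin (n+1), (b : ℕ) + 1 = q :=
    ⟨⟨q-1, by omega⟩, Nat.sub_add_cancel (by omega)⟩
  rw [← val_posIdx a, ← val_posIdx b, Eu_succ_succ, diagBlocks_add_theta, diagBlocks_single]
  simp only [Prod.smul_mk, smul_smul, Fin.ext_iff, Fin.val_last, val_posIdx, add_left_inj]
  split_ifs <;> norm_num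

theorem eG_eq (n i : ℕ) : eG n i = Eu (2*n+1) i (i+1) + theta n (Eu (2*n+1) i (i+1)) := by
  rw [theta_Eu, eG, show 2*n+2-(i+1) = 2*n+1-i by omega]

theorem fG_eq (n i : ℕ) : fG n i = Eu (2*n+1) (i+1) i + theta n (Eu (2*n+1) (i+1) i) := by
  rw [theta_Eu, fG, show 2*n+2-(i+1) = 2*n+1-i by omega]

theorem dG_eq (n a : ℕ) : dG n a = Eu (2*n+1) a a + theta n (Eu (2*n+1) a a) := by
  rw [theta_Eu, dG]

end FixedPoints

/-- There is a Lie algebra isomorphism `φ : gl_{2n+1}(ℂ)^θ → gl_{n+1}(ℂ) ⊕ gl_n(ℂ)` with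
`φ(e_i) = e_i + ē_i`, `φ(f_i) = f_i + f̄_i` for `i < n`, `φ(e_n) = 2e_n`, `φ(f_n) = f_n`,
`φ(d_i) = h_i + h̄_i` for `1 ≤ i ≤ n`, and `φ(d_{n+1}) = 2h_{n+1}` (first components in
`gl_{n+1}`, second components in `gl_n`). -/
theorem stmt_7 (n : ℕ) :
    ∃ φ : Fixed n →ₗ[ℂ] Matrix (Fin (n+1)) (Fin (n+1)) ℂ × Matrix (Fin n) (Fin n) ℂ,
      Function.Bijective φ ∧
      (∀ x y z : Fixed n, (z : gl n) = ⁅(x : gl n), (y : gl n)⁆ →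
        (φ z).1 = ⁅(φ x).1, (φ y).1⁆ ∧ (φ z).2 = ⁅(φ x).2, (φ y).2⁆) ∧
      (∀ i : ℕ, 1 ≤ i → i < n → ∀ x : Fixed n,
        ((x : gl n) = eG n i → φ x = (Eu (n+1) i (i+1), Eu n i (i+1))) ∧
        ((x : gl n) = fG n i → φ x = (Eu (n+1) (i+1) i, Eu n (i+1) i))) ∧
      (∀ x : Fixed n,
        ((x : gl n) = eG n n → φ x = ((2 : ℂ) • Eu (n+1) n (n+1), 0)) ∧
        ((x : gl n) = fG n n → φ x = (Eu (n+1) (n+1) n, 0))) ∧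
      (∀ i : ℕ, 1 ≤ i → i ≤ n → ∀ x : Fixed n,
        (x : gl n) = dG n i → φ x = (Eu (n+1) i i, Eu n i i)) ∧
      (∀ x : Fixed n,
        (x : gl n) = dG n (n+1) → φ x = ((2 : ℂ) • Eu (n+1) (n+1) (n+1), 0)) := by
  refine ⟨fixedEquiv n, (fixedEquiv n).bijective, ?_, ?_, ?_, ?_, ?_⟩
  · intro x y z hz
    have h : diagBlocks n z =
        diagBlocks n x * diagBlocks n y - diagBlocks n y * diagBlocks n x := by
      rw [hz, Ring.lie_def, map_sub, diagBlocks_mul x.2, diagBlocks_mul y.2]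
    exact ⟨congrArg Prod.fst h, congrArg Prod.snd h⟩
  · intro i _ hi x
    constructor <;> intro hx <;> change diagBlocks n x = _
    · rw [hx, eG_eq, diagBlocks_Eu_add_theta (by omega) (by omega), if_neg (by omega), one_smul]
    · rw [hx, fG_eq, diagBlocks_Eu_add_theta (by omega) (by omega), if_neg (by omega), one_smul]
  · intro x
    constructor <;> intro hx <;> change diagBlocks n x = _
    · rw [hx, eG_eq, diagBlocks_Eu_add_theta (by omega) le_rfl, if_pos rfl,
        (Eu_eq_zero (by omega) : Eu n n (n+1) = 0)]
    · rw [hx, fG_eq, diagBlocks_Eu_add_theta le_rfl (by omega), if_neg (by omega), one_smul,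
        (Eu_eq_zero (by omega) : Eu n (n+1) n = 0)]
  · intro i _ hi x hx
    change diagBlocks n x = _
    rw [hx, dG_eq, diagBlocks_Eu_add_theta (by omega) (by omega), if_neg (by omega), one_smul]
  · intro x hx
    change diagBlocks n x = _
    rw [hx, dG_eq, diagBlocks_Eu_add_theta le_rfl le_rfl, if_pos rfl,
      (Eu_eq_zero (by omega) : Eu n (n+1) (n+1) = 0)]
end
end

section
/- There is a Lie algebra homomorphism ρ from gl_{2n}(ℂ)^θ to gl_n(ℂ) ⊕ gl_n(ℂ) determined by ρ(e_i) = e_i + ē_i, ρ(f_i) = f_i + f̄_i (1 ≤ i ≤ n−1), ρ(d_i) = h_i + h̄_i (1 ≤ i ≤ n), and ρ(t) = h_n − h̄_n; moreover ρ is an isomorphism. -/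
open Matrix

noncomputable section

/-- `gl_{2n}(ℂ)` with bracket `[X,Y] = XY - YX`. -/
abbrev gle (n : ℕ) := Matrix (Fin (2*n)) (Fin (2*n)) ℂ

/-- `e_j = E_j + F_{2n-j} = E_{j,j+1} + E_{2n+1-j,2n-j}`. -/
def eE (n j : ℕ) : gle n := Eu (2*n) j (j+1) + Eu (2*n) (2*n+1-j) (2*n-j)

/-- `f_j = F_j + E_{2n-j} = E_{j+1,j} + E_{2n-j,2n+1-j}`. -/
def fE (n j : ℕ) : gle n := Eu (2*n) (j+1) j + Eu (2*n) (2*n-j) (2*n+1-j)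

/-- `t = E_n + F_n = E_{n,n+1} + E_{n+1,n}`. -/
def tE (n : ℕ) : gle n := Eu (2*n) n (n+1) + Eu (2*n) (n+1) n

/-- `d_a = H_a + H_{2n+1-a}`. -/
def dE (n a : ℕ) : gle n := Eu (2*n) a a + Eu (2*n) (2*n+1-a) (2*n+1-a)

/-- The involution `θ` of `gl_{2n}(ℂ)` with `θ(E_i) = F_{2n-i}`, `θ(F_i) = E_{2n-i}`,
`θ(H_i) = H_{2n+1-i}` (conjugation by the order-reversing permutation). -/
def thetaE (n : ℕ) (X : gle n) : gle n := Matrix.of fun i j => X i.rev j.rev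

theorem thetaE_linear (n : ℕ) (c : ℂ) (X Y : gle n) :
    thetaE n (X + Y) = thetaE n X + thetaE n Y ∧ thetaE n (c • X) = c • thetaE n X := by
  constructor <;> (ext i j; simp [thetaE])

/-- The fixed-point subalgebra `gl_{2n}(ℂ)^θ`, as a subspace. -/
def FixedE (n : ℕ) : Submodule ℂ (gle n) where
  carrier := {X | thetaE n X = X}
  add_mem' := by
    intro a b ha hb
    simp only [Set.mem_setOf_eq] at *
    rw [(thetaE_linear n 0 a b).1, ha, hb]
  zero_mem' := by
    simp only [Set.mem_setOf_eq]
    ext i j; simp [thetaE]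
  smul_mem' := by
    intro c x hx
    simp only [Set.mem_setOf_eq] at *
    rw [(thetaE_linear n c x x).2, hx]

/-!
Reindex `Fin (2n)` as `Fin n ⊕ Fin n`, sending `inr k` to the mirror image of `inl k`; then `θ`
becomes conjugation by `Sum.swap`, and the `θ`-fixed matrices are exactly the block matrices
`[[P, Q], [Q, P]]`. These act on the `±1`-eigenspaces of the swap as `P + Q` and `P - Q`, so
`[[P, Q], [Q, P]] ↦ (P + Q, P - Q)` is multiplicative, with inverse
`(A, B) ↦ ½ [[A + B, A - B], [A - B, A + B]]`. The images of the generators are read off blockwise.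
-/

namespace Matrix

section SwapInvariant

variable (κ R : Type*) [Ring R]

def swapInvariant : Submodule R (Matrix (κ ⊕ κ) (κ ⊕ κ) R) where
  carrier := {X | X.submatrix Sum.swap Sum.swap = X}
  add_mem' {X Y} hX hY := by simp_all [submatrix_add]
  zero_mem' := by simp
  smul_mem' c X hX := by simp_all [submatrix_smul]

variable {κ R}

theorem mem_swapInvariant_iff {X : Matrix (κ ⊕ κ) (κ ⊕ κ) R} :
    X ∈ swapInvariant κ R ↔ ∃ P Q, X = fromBlocks P Q Q P := by
  refine ⟨fun hX => ⟨X.toBlocks₁₁, X.toBlocks₁₂, ?_⟩, ?_⟩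
  · have hX' (a b) : X a.swap b.swap = X a b := congr_fun₂ hX a b
    ext (i | i) (j | j)
    · rfl
    · rfl
    · exact (hX' (.inr i) (.inl j)).symm
    · exact (hX' (.inr i) (.inr j)).symm
  · rintro ⟨P, Q, rfl⟩
    exact fromBlocks_submatrix_sum_swap_sum_swap P Q Q P

def sumDiff : Matrix (κ ⊕ κ) (κ ⊕ κ) R →ₗ[R] Matrix κ κ R × Matrix κ κ R where
  toFun X := (X.toBlocks₁₁ + X.toBlocks₁₂, X.toBlocks₁₁ - X.toBlocks₁₂)
  map_add' X Y := by ext <;> simp [toBlocks₁₁, toBlocks₁₂] <;> abel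
  map_smul' c X := by ext <;> simp [toBlocks₁₁, toBlocks₁₂, mul_sub]

@[simp]
theorem sumDiff_fromBlocks (A B C D : Matrix κ κ R) :
    sumDiff (fromBlocks A B C D) = (A + B, A - B) := by
  simp [sumDiff]

theorem sumDiff_mul [Fintype κ] (X : Matrix (κ ⊕ κ) (κ ⊕ κ) R) {Y : Matrix (κ ⊕ κ) (κ ⊕ κ) R}
    (hY : Y ∈ swapInvariant κ R) : sumDiff (X * Y) = sumDiff X * sumDiff Y := by
  obtain ⟨P, Q, rfl⟩ := mem_swapInvariant_iff.mp hY
  rw [← fromBlocks_toBlocks X, fromBlocks_multiply]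
  simp only [sumDiff_fromBlocks, Prod.mk_mul_mk]
  congr 1 <;> noncomm_ring

theorem sumDiff_lie [Fintype κ] {X Y : Matrix (κ ⊕ κ) (κ ⊕ κ) R}
    (hX : X ∈ swapInvariant κ R) (hY : Y ∈ swapInvariant κ R) :
    sumDiff ⁅X, Y⁆ = ⁅sumDiff X, sumDiff Y⁆ := by
  rw [Ring.lie_def, Ring.lie_def, map_sub, sumDiff_mul X hY, sumDiff_mul Y hX]

variable [Invertible (2 : R)]

def swapInvariantEquiv : swapInvariant κ R ≃ₗ[R] Matrix κ κ R × Matrix κ κ R where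
  toLinearMap := sumDiff ∘ₗ (swapInvariant κ R).subtype
  invFun AB := ⟨fromBlocks (⅟(2 : R) • (AB.1 + AB.2)) (⅟(2 : R) • (AB.1 - AB.2))
      (⅟(2 : R) • (AB.1 - AB.2)) (⅟(2 : R) • (AB.1 + AB.2)), mem_swapInvariant_iff.mpr ⟨_, _, rfl⟩⟩
  left_inv := by
    rintro ⟨X, hX⟩
    obtain ⟨P, Q, rfl⟩ := mem_swapInvariant_iff.mp hX
    ext1
    simp
  right_inv := by
    rintro ⟨A, B⟩
    have half_two_smul (M : Matrix κ κ R) : ⅟(2 : R) • (2 : R) • M = M := by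
      rw [smul_smul, invOf_mul_self, one_smul]
    simp only [LinearMap.toFun_eq_coe, LinearMap.comp_apply, Submodule.coe_subtype,
      sumDiff_fromBlocks, ← smul_add, ← smul_sub, Prod.mk.injEq]
    constructor
    · convert half_two_smul A using 2; rw [two_smul]; abel
    · convert half_two_smul B using 2; rw [two_smul]; abel

end SwapInvariant

end Matrix

def finSumFinRevEquiv (n : ℕ) : Fin n ⊕ Fin n ≃ Fin (2 * n) :=
  (Equiv.sumCongr (Equiv.refl _) Fin.revPerm).trans
    (finSumFinEquiv.trans (finCongr (two_mul n).symm))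

@[simp]
theorem val_finSumFinRevEquiv_inl {n : ℕ} (k : Fin n) :
    (finSumFinRevEquiv n (.inl k) : ℕ) = k :=
  rfl

theorem finSumFinRevEquiv_swap {n : ℕ} (s : Fin n ⊕ Fin n) :
    finSumFinRevEquiv n s.swap = (finSumFinRevEquiv n s).rev := by
  rcases s with k | k <;> ext <;> simp [finSumFinRevEquiv] <;> omega

@[simp]
theorem val_finSumFinRevEquiv_inr {n : ℕ} (k : Fin n) :
    (finSumFinRevEquiv n (.inr k) : ℕ) = 2 * n - (k + 1) := by
  rw [← Sum.swap_inl, finSumFinRevEquiv_swap, Fin.val_rev, val_finSumFinRevEquiv_inl]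

theorem mem_FixedE_iff {n : ℕ} {X : gle n} :
    X ∈ FixedE n ↔
      X.submatrix (finSumFinRevEquiv n) (finSumFinRevEquiv n) ∈ swapInvariant (Fin n) ℂ := by
  set e := finSumFinRevEquiv n
  have h : (X.submatrix e e).submatrix Sum.swap Sum.swap = (thetaE n X).submatrix e e := by
    ext a b
    simp [thetaE, e, finSumFinRevEquiv_swap]
  change thetaE n X = X ↔ _ = _
  rw [h]
  exact (reindex e.symm e.symm).injective.eq_iff.symm

def fixedEquivSwapInvariant (n : ℕ) : FixedE n ≃ₗ[ℂ] swapInvariant (Fin n) ℂ :=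
  (reindexLinearEquiv ℂ ℂ (finSumFinRevEquiv n).symm (finSumFinRevEquiv n).symm).ofSubmodules
    _ _ <| by
      ext Y
      rw [Submodule.mem_map_equiv, mem_FixedE_iff]
      simp

def fixedEquivProd (n : ℕ) :
    FixedE n ≃ₗ[ℂ] Matrix (Fin n) (Fin n) ℂ × Matrix (Fin n) (Fin n) ℂ :=
  (fixedEquivSwapInvariant n).trans swapInvariantEquiv

theorem fixedEquivProd_apply {n : ℕ} (x : FixedE n) :
    fixedEquivProd n x =
      sumDiff ((x : gle n).submatrix (finSumFinRevEquiv n) (finSumFinRevEquiv n)) :=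
  rfl

theorem fixedEquivProd_lie {n : ℕ} {x y z : FixedE n}
    (hz : (z : gle n) = ⁅(x : gle n), (y : gle n)⁆) :
    fixedEquivProd n z = ⁅fixedEquivProd n x, fixedEquivProd n y⁆ := by
  rw [fixedEquivProd_apply, fixedEquivProd_apply, fixedEquivProd_apply,
    ← sumDiff_lie (mem_FixedE_iff.mp x.2) (mem_FixedE_iff.mp y.2), hz]
  simp [Ring.lie_def, submatrix_mul_equiv, submatrix_sub]

theorem submatrix_Eu_add_Eu_of_le {n p q p' q' : ℕ} (hp : p ≤ n) (hq : q ≤ n)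
    (hp' : p + p' = 2 * n + 1) (hq' : q + q' = 2 * n + 1) :
    (Eu (2 * n) p q + Eu (2 * n) p' q').submatrix (finSumFinRevEquiv n) (finSumFinRevEquiv n) =
      fromBlocks (Eu n p q) 0 0 (Eu n p q) := by
  ext (i | i) (j | j) <;> simp [Eu] <;> split_ifs <;> grind

theorem submatrix_Eu_add_Eu_of_le_of_gt {n p q p' q' : ℕ} (hp : p ≤ n) (hq : n < q)
    (hp' : p + p' = 2 * n + 1) (hq' : q + q' = 2 * n + 1) :
    (Eu (2 * n) p q + Eu (2 * n) p' q').submatrix (finSumFinRevEquiv n) (finSumFinRevEquiv n) =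
      fromBlocks 0 (Eu n p q') (Eu n p q') 0 := by
  ext (i | i) (j | j) <;> simp [Eu] <;> split_ifs <;> grind

theorem fixedEquivProd_eq_of_le {n p q p' q' : ℕ} {x : FixedE n}
    (hx : (x : gle n) = Eu (2 * n) p q + Eu (2 * n) p' q') (hp : p ≤ n) (hq : q ≤ n)
    (hp' : p + p' = 2 * n + 1) (hq' : q + q' = 2 * n + 1) :
    fixedEquivProd n x = (Eu n p q, Eu n p q) := by
  rw [fixedEquivProd_apply, hx, submatrix_Eu_add_Eu_of_le hp hq hp' hq', sumDiff_fromBlocks,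
    add_zero, sub_zero]

theorem fixedEquivProd_eq_of_le_of_gt {n p q p' q' : ℕ} {x : FixedE n}
    (hx : (x : gle n) = Eu (2 * n) p q + Eu (2 * n) p' q') (hp : p ≤ n) (hq : n < q)
    (hp' : p + p' = 2 * n + 1) (hq' : q + q' = 2 * n + 1) :
    fixedEquivProd n x = (Eu n p q', -Eu n p q') := by
  rw [fixedEquivProd_apply, hx, submatrix_Eu_add_Eu_of_le_of_gt hp hq hp' hq',
    sumDiff_fromBlocks, zero_add, zero_sub]

/-- There is a Lie algebra isomorphism `ρ : gl_{2n}(ℂ)^θ → gl_n(ℂ) ⊕ gl_n(ℂ)` with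
`ρ(e_i) = e_i + ē_i`, `ρ(f_i) = f_i + f̄_i` (`1 ≤ i ≤ n-1`), `ρ(d_i) = h_i + h̄_i`
(`1 ≤ i ≤ n`), and `ρ(t) = h_n - h̄_n`. -/
theorem stmt_12 (n : ℕ) :
    ∃ ρ : FixedE n →ₗ[ℂ] Matrix (Fin n) (Fin n) ℂ × Matrix (Fin n) (Fin n) ℂ,
      Function.Bijective ρ ∧
      (∀ x y z : FixedE n, (z : gle n) = ⁅(x : gle n), (y : gle n)⁆ →
        (ρ z).1 = ⁅(ρ x).1, (ρ y).1⁆ ∧ (ρ z).2 = ⁅(ρ x).2, (ρ y).2⁆) ∧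
      (∀ i : ℕ, 1 ≤ i → i ≤ n-1 → ∀ x : FixedE n,
        ((x : gle n) = eE n i → ρ x = (Eu n i (i+1), Eu n i (i+1))) ∧
        ((x : gle n) = fE n i → ρ x = (Eu n (i+1) i, Eu n (i+1) i))) ∧
      (∀ i : ℕ, 1 ≤ i → i ≤ n → ∀ x : FixedE n,
        (x : gle n) = dE n i → ρ x = (Eu n i i, Eu n i i)) ∧
      (∀ x : FixedE n, (x : gle n) = tE n → ρ x = (Eu n n n, -(Eu n n n))) := by
  refine ⟨(fixedEquivProd n).toLinearMap, (fixedEquivProd n).bijective, fun x y z hz => ?_,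
    fun i hi hin x => ⟨fun hx => ?_, fun hx => ?_⟩, fun i hi hin x hx => ?_, fun x hx => ?_⟩
  · simp [fixedEquivProd_lie hz, Ring.lie_def]
  · exact fixedEquivProd_eq_of_le hx (by omega) (by omega) (by omega) (by omega)
  · exact fixedEquivProd_eq_of_le hx (by omega) (by omega) (by omega) (by omega)
  · exact fixedEquivProd_eq_of_le hx hin hin (by omega) (by omega)
  · exact fixedEquivProd_eq_of_le_of_gt hx le_rfl (by omega) (by omega) (by omega)
end
end
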